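/- For skew-symmetric graded matrices over ℤ, u_+ and u_− are invariant under the move M₃ deleting a pair of complementary elements: if g₁, g₂ ∈ G − {s} are complementary and T' is T with g₁, g₂ deleted, then u_±(T') = u_±(T). -/

import Mathlib

/-- A graded matrix over an abelian group `A`: a finite set `G` with a distinguished
element `s`, a partition of `G - {s}` into positive and negative elements (recorded by
`pos`, whose value at `s` is irrelevant), and a map `b : G × G → A`. -/
structure GradedMatrix (A : Type) [AddCommGroup A] where
  G : Type
  [fin : Fintype G]
  [dec : DecidableEq G]
  s : G
  pos : G → Bool
  b : G → G → A

attribute [instance] GradedMatrix.fin GradedMatrix.dec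

variable {A : Type} [AddCommGroup A]

/-- The graded matrix `-T`: negated form, swapped partition. -/
def GradedMatrix.neg (T : GradedMatrix A) : GradedMatrix A :=
  { G := T.G, s := T.s, pos := fun g => !T.pos g, b := fun g h => -T.b g h }

/-- The form `b⁻` of the graded matrix `T⁻`. -/
def GradedMatrix.bminus (T : GradedMatrix A) : T.G → T.G → A := fun g h =>
  if g = T.s then -T.b g h
  else if h = T.s then -T.b g h
  else T.b g h - T.b g T.s - T.b T.s h

/-- The graded matrix `T⁻`, with the same partition. -/
def GradedMatrix.minus (T : GradedMatrix A) : GradedMatrix A :=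
  { T with b := T.bminus }

/-- Skew-symmetry of a graded matrix. -/
def GradedMatrix.IsSkew (T : GradedMatrix A) : Prop :=
  (∀ g h, T.b g h = -T.b h g) ∧ ∀ g, T.b g g = 0

/-- An element `g ∈ G - {s}` of type 1: `b(g, ·) ≡ 0`. -/
def GradedMatrix.Type1 (T : GradedMatrix A) (g : T.G) : Prop :=
  g ≠ T.s ∧ ∀ h, T.b g h = 0

/-- An element `g ∈ G - {s}` of type 2: `b(g, ·) = b(s, ·)`. -/
def GradedMatrix.Type2 (T : GradedMatrix A) (g : T.G) : Prop :=
  g ≠ T.s ∧ ∀ h, T.b g h = T.b T.s h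

/-- Complementary elements `g₁, g₂ ∈ G - {s}`: opposite signs and
`b(g₁,·) + b(g₂,·) = b(s,·)`. -/
def GradedMatrix.Compl (T : GradedMatrix A) (g₁ g₂ : T.G) : Prop :=
  g₁ ≠ T.s ∧ g₂ ≠ T.s ∧ T.pos g₁ ≠ T.pos g₂ ∧ ∀ h, T.b g₁ h + T.b g₂ h = T.b T.s h

/-- Deletion of an element `g₀ ≠ s` from a graded matrix. -/
def GradedMatrix.delete (T : GradedMatrix A) (g₀ : T.G) (hg : g₀ ≠ T.s) :
    GradedMatrix A :=
  { G := {g : T.G // g ≠ g₀}, s := ⟨T.s, fun h => hg h.symm⟩,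
    pos := fun g => T.pos g.1, b := fun g h => T.b g.1 h.1 }

/-- Deletion of two elements `g₁, g₂ ≠ s` from a graded matrix. -/
def GradedMatrix.delete2 (T : GradedMatrix A) (g₁ g₂ : T.G)
    (h₁ : g₁ ≠ T.s) (h₂ : g₂ ≠ T.s) : GradedMatrix A :=
  { G := {g : T.G // g ≠ g₁ ∧ g ≠ g₂},
    s := ⟨T.s, ⟨fun h => h₁ h.symm, fun h => h₂ h.symm⟩⟩,
    pos := fun g => T.pos g.1, b := fun g h => T.b g.1 h.1 }

/-- The sign `±1` of an element of a graded matrix over `ℤ`. -/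
def GradedMatrix.sgn (T : GradedMatrix ℤ) (g : T.G) : ℤ := if T.pos g then 1 else -1

/-- The polynomial `u₊(T) = ∑_{g ≠ s, b(g,s) ≠ 0, sign(b(g,s)) = sign(g)} sign(g) t^{|b(g,s)|}`. -/
noncomputable def GradedMatrix.uplus (T : GradedMatrix ℤ) : Polynomial ℤ :=
  ∑ g ∈ Finset.univ.filter
      (fun g => g ≠ T.s ∧ T.b g T.s ≠ 0 ∧ Int.sign (T.b g T.s) = T.sgn g),
    Polynomial.C (T.sgn g) * Polynomial.X ^ (T.b g T.s).natAbs

/-- The polynomial `u₋(T) = ∑_{g ≠ s, b(g,s) ≠ 0, sign(b(g,s)) = -sign(g)} sign(g) t^{|b(g,s)|}`. -/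
noncomputable def GradedMatrix.uminus (T : GradedMatrix ℤ) : Polynomial ℤ :=
  ∑ g ∈ Finset.univ.filter
      (fun g => g ≠ T.s ∧ T.b g T.s ≠ 0 ∧ Int.sign (T.b g T.s) = -T.sgn g),
    Polynomial.C (T.sgn g) * Polynomial.X ^ (T.b g T.s).natAbs


/-! Both `u₊` and `u₋` are sums of a contribution depending only on `(sign(g), b(g,s))`, and
that contribution is odd in the pair. For complementary `g₁, g₂` the pairs are exactly
opposite (since `b(g₁,s) + b(g₂,s) = b(s,s) = 0`), so their contributions cancel and deleting
both changes nothing. -/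

open Polynomial

theorem Fintype.sum_subtype_ne_ne_add {α M : Type*} [Fintype α] [DecidableEq α]
    [AddCommMonoid M] (f : α → M) {a b : α} (hab : a ≠ b) :
    ∑ x : {x // x ≠ a ∧ x ≠ b}, f x + (f a + f b) = ∑ x, f x := by
  rw [← Finset.sum_pair hab,
    ← Finset.sum_subtype (Finset.univ \ {a, b}) (fun x => by simp) f]
  exact Finset.sum_sdiff (Finset.subset_univ _)

namespace GradedMatrix

/-- The contribution to `u₊` (for `ε = 1`) or `u₋` (for `ε = -1`) of an element of sign `σ`
with `b(g,s) = β`. -/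
noncomputable def uTerm (ε σ β : ℤ) : ℤ[X] :=
  if β ≠ 0 ∧ β.sign = ε * σ then C σ * X ^ β.natAbs else 0

theorem uTerm_neg_neg (ε σ β : ℤ) : uTerm ε (-σ) (-β) = -uTerm ε σ β := by
  have hcond : (-β ≠ 0 ∧ (-β).sign = ε * -σ) ↔ (β ≠ 0 ∧ β.sign = ε * σ) := by
    simp only [ne_eq, neg_eq_zero, Int.sign_neg, mul_neg, neg_inj]
  unfold uTerm
  split_ifs with h₁ h₂ h₂
  · rw [Int.natAbs_neg, map_neg, neg_mul]
  · exact absurd (hcond.mp h₁) h₂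
  · exact absurd (hcond.mpr h₂) h₁
  · rw [neg_zero]

noncomputable def usum (ε : ℤ) (T : GradedMatrix ℤ) : ℤ[X] :=
  ∑ g with g ≠ T.s, uTerm ε (T.sgn g) (T.b g T.s)

theorem usum_eq_sum_filter (ε : ℤ) (T : GradedMatrix ℤ) :
    T.usum ε = ∑ g ∈ Finset.univ.filter
      (fun g => g ≠ T.s ∧ T.b g T.s ≠ 0 ∧ Int.sign (T.b g T.s) = ε * T.sgn g),
      C (T.sgn g) * X ^ (T.b g T.s).natAbs := by
  simp only [usum, uTerm, Finset.sum_filter]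
  refine Finset.sum_congr rfl fun g _ => ?_
  split_ifs <;> tauto

theorem uplus_eq_usum (T : GradedMatrix ℤ) : T.uplus = T.usum 1 := by
  simp only [usum_eq_sum_filter, one_mul, uplus]

theorem uminus_eq_usum (T : GradedMatrix ℤ) : T.uminus = T.usum (-1) := by
  simp only [usum_eq_sum_filter, neg_one_mul, uminus]

theorem usum_delete2_add (ε : ℤ) (T : GradedMatrix ℤ) {g₁ g₂ : T.G} (h₁ : g₁ ≠ T.s)
    (h₂ : g₂ ≠ T.s) (h₁₂ : g₁ ≠ g₂) :
    (T.delete2 g₁ g₂ h₁ h₂).usum ε +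
      (uTerm ε (T.sgn g₁) (T.b g₁ T.s) + uTerm ε (T.sgn g₂) (T.b g₂ T.s)) = T.usum ε := by
  let f : T.G → ℤ[X] := fun g => if g ≠ T.s then uTerm ε (T.sgn g) (T.b g T.s) else 0
  have hsub : (T.delete2 g₁ g₂ h₁ h₂).usum ε = ∑ g : {g // g ≠ g₁ ∧ g ≠ g₂}, f g := by
    simp only [usum, Finset.sum_filter]
    refine Fintype.sum_congr _ _ fun g => ?_
    exact if_congr (not_congr Subtype.ext_iff) rfl rfl
  have hf₁ : f g₁ = uTerm ε (T.sgn g₁) (T.b g₁ T.s) := if_pos h₁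
  have hf₂ : f g₂ = uTerm ε (T.sgn g₂) (T.b g₂ T.s) := if_pos h₂
  rw [hsub, ← hf₁, ← hf₂, Fintype.sum_subtype_ne_ne_add f h₁₂, usum, Finset.sum_filter]

theorem sgn_eq_neg_of_pos_ne (T : GradedMatrix ℤ) {g₁ g₂ : T.G} (h : T.pos g₁ ≠ T.pos g₂) :
    T.sgn g₂ = -T.sgn g₁ := by
  unfold sgn
  cases hp₁ : T.pos g₁ <;> cases hp₂ : T.pos g₂ <;> simp_all

theorem usum_delete2_of_compl (ε : ℤ) (T : GradedMatrix ℤ) (hss : T.b T.s T.s = 0)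
    {g₁ g₂ : T.G} (hc : T.Compl g₁ g₂) :
    (T.delete2 g₁ g₂ hc.1 hc.2.1).usum ε = T.usum ε := by
  obtain ⟨h₁, h₂, hpos, hsum⟩ := hc
  have hb : T.b g₂ T.s = -T.b g₁ T.s := by linear_combination hsum T.s + hss
  have h₁₂ : g₁ ≠ g₂ := fun h => hpos (congrArg T.pos h)
  rw [← usum_delete2_add ε T h₁ h₂ h₁₂, hb, sgn_eq_neg_of_pos_ne T hpos, uTerm_neg_neg,
    add_neg_cancel, add_zero]

end GradedMatrix

/-- for skew-symmetric graded matrices over `ℤ`, `u₊` and `u₋` are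
invariant under the move `M₃` deleting a pair of complementary elements. -/
theorem u_delete_compl (T : GradedMatrix ℤ) (hsk : T.IsSkew) (g₁ g₂ : T.G)
    (hc : T.Compl g₁ g₂) :
    (T.delete2 g₁ g₂ hc.1 hc.2.1).uplus = T.uplus ∧
    (T.delete2 g₁ g₂ hc.1 hc.2.1).uminus = T.uminus := by
  simp only [GradedMatrix.uplus_eq_usum, GradedMatrix.uminus_eq_usum,
    GradedMatrix.usum_delete2_of_compl _ T (hsk.2 T.s) hc, and_self]
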